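/- arXiv:2505.15362 — 3 statements merged into one kernel-verified Lean document; each statement's English description precedes it below -/
import Mathlib

section
/- For \(d \ge 3\) and \(n \ge d\), every \(d\)-blocking set on an \(n\)-element set has size at least \(\frac{2\, n(n-1)\cdots(n-(d-3))\,(n-(d-1))}{d!}\), i.e. \(\varphi_d(n) \ge \frac{2}{d!} \cdot (n - d + 1) \cdot \prod_{i=0}^{d-3}(n-i)\). -/
/-- A `d`-partition of a finite set `V`: `d` pairwise disjoint nonempty parts whose union is `V`. -/
def IsDPartition {α : Type*} [DecidableEq α] (d : ℕ) (V : Finset α)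
    (P : Fin d → Finset α) : Prop :=
  (∀ i, (P i).Nonempty) ∧ (∀ i j, i ≠ j → Disjoint (P i) (P j)) ∧
    Finset.univ.biUnion P = V

/-- `E` is a `d`-blocking set on `V`: a family of `d`-element subsets of `V` such that every
`d`-partition of `V` has a member of `E` meeting all parts. -/
def IsBlockingSet {α : Type*} [DecidableEq α] (d : ℕ) (V : Finset α)
    (E : Finset (Finset α)) : Prop :=
  (∀ e ∈ E, e ⊆ V ∧ e.card = d) ∧
  ∀ P : Fin d → Finset α, IsDPartition d V P → ∃ e ∈ E, ∀ i, (e ∩ P i).Nonempty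

/-- `phi d n` is the minimum size of a `d`-blocking set on an `n`-element set. -/
noncomputable def phi (d n : ℕ) : ℕ :=
  sInf { m | ∃ E : Finset (Finset (Fin n)),
    IsBlockingSet d Finset.univ E ∧ E.card = m }

/-! For a `(d - 2)`-set `S`, the sets `e \ S` with `S ⊆ e ∈ E` form a `2`-blocking set on the
remaining `n - d + 2` points, that is, the edge set of a connected graph on them; so at least
`n - d + 1` members of `E` contain `S`. Each member of `E` contains `C(d, 2)` sets of size
`d - 2`, and double counting over all `C(n, d - 2)` of them gives
`C(n, d - 2) (n - d + 1) ≤ C(d, 2) |E|`. -/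

open Finset

variable {α : Type*} [DecidableEq α]

lemma isDPartition_append {k m : ℕ} {S T : Finset α} {Q : Fin k → Finset α}
    {P : Fin m → Finset α} (hQ : IsDPartition k S Q) (hP : IsDPartition m T P)
    (hST : Disjoint S T) : IsDPartition (k + m) (S ∪ T) (Fin.append Q P) := by
  have hQS i : Q i ⊆ S := hQ.2.2 ▸ subset_biUnion_of_mem Q (mem_univ i)
  have hPT j : P j ⊆ T := hP.2.2 ▸ subset_biUnion_of_mem P (mem_univ j)
  refine ⟨Fin.addCases (by simpa using hQ.1) (by simpa using hP.1), ?_, ?_⟩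
  · refine Fin.addCases (fun i => Fin.addCases (fun i' h => ?_) fun j' _ => ?_)
      fun j => Fin.addCases (fun i' _ => ?_) fun j' h => ?_ <;>
      simp only [Fin.append_left, Fin.append_right]
    · exact hQ.2.1 i i' (by rintro rfl; exact h rfl)
    · exact hST.mono (hQS i) (hPT j')
    · exact (hST.mono (hQS i') (hPT j)).symm
    · exact hP.2.1 j j' (by rintro rfl; exact h rfl)
  · ext x
    simp only [mem_biUnion, mem_univ, true_and, mem_union, ← hQ.2.2, ← hP.2.2]
    constructor
    · rintro ⟨i, hi⟩
      induction i using Fin.addCases with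
      | left i => exact .inl ⟨i, by simpa using hi⟩
      | right j => exact .inr ⟨j, by simpa using hi⟩
    · rintro (⟨i, hi⟩ | ⟨j, hj⟩)
      · exact ⟨Fin.castAdd m i, by simpa using hi⟩
      · exact ⟨Fin.natAdd k j, by simpa using hj⟩

lemma isDPartition_singleton {k : ℕ} {S : Finset α} (s : Fin k ≃ S) :
    IsDPartition k S (fun i => {(s i : α)}) := by
  refine ⟨fun i => singleton_nonempty _, fun i j hij => ?_, ?_⟩
  · simpa [Subtype.val_inj] using hij
  · ext x
    simp only [mem_biUnion, mem_univ, true_and, mem_singleton]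
    exact ⟨by rintro ⟨i, rfl⟩; exact (s i).2, fun hx => ⟨s.symm ⟨x, hx⟩, by simp⟩⟩

lemma isDPartition_two {A B : Finset α} (hA : A.Nonempty) (hB : B.Nonempty)
    (hAB : Disjoint A B) : IsDPartition 2 (A ∪ B) ![A, B] := by
  refine ⟨fun i => ?_, fun i j hij => ?_, ?_⟩
  · fin_cases i <;> assumption
  · fin_cases i <;> fin_cases j <;> simp_all [disjoint_comm]
  · simp [Fin.univ_succ]

def link (E : Finset (Finset α)) (S : Finset α) : Finset (Finset α) :=
  {e ∈ E | S ⊆ e}.image (· \ S)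

lemma IsBlockingSet.link {k m : ℕ} {V S : Finset α} {E : Finset (Finset α)}
    (hE : IsBlockingSet (k + m) V E) (hSV : S ⊆ V) (hS : #S = k) :
    IsBlockingSet m (V \ S) (link E S) := by
  refine ⟨?_, fun P hP => ?_⟩
  · simp only [_root_.link, mem_image, mem_filter]
    rintro _ ⟨e, ⟨he, hSe⟩, rfl⟩
    refine ⟨sdiff_subset_sdiff (hE.1 e he).1 le_rfl, ?_⟩
    rw [card_sdiff_of_subset hSe, (hE.1 e he).2, hS, Nat.add_sub_cancel_left]
  · let s : Fin k ≃ S := (S.equivFinOfCardEq hS).symm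
    have hPart : IsDPartition (k + m) V (Fin.append (fun i => {(s i : α)}) P) := by
      simpa [union_sdiff_of_subset hSV] using
        isDPartition_append (isDPartition_singleton s) hP disjoint_sdiff
    obtain ⟨e, he, hmeet⟩ := hE.2 _ hPart
    have hSe : S ⊆ e := fun x hx => by
      obtain ⟨y, hy⟩ := hmeet (Fin.castAdd m (s.symm ⟨x, hx⟩))
      simp only [Fin.append_left, Equiv.apply_symm_apply, mem_inter, mem_singleton] at hy
      exact hy.2 ▸ hy.1
    refine ⟨e \ S, mem_image_of_mem _ (mem_filter.2 ⟨he, hSe⟩), fun j => ?_⟩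
    obtain ⟨x, hx⟩ := hmeet (Fin.natAdd k j)
    rw [Fin.append_right, mem_inter] at hx
    obtain ⟨hxe, hxP⟩ := hx
    have hxS : x ∉ S := (mem_sdiff.1 (hP.2.2 ▸ subset_biUnion_of_mem P (mem_univ j) hxP)).2
    exact ⟨x, mem_inter.2 ⟨mem_sdiff.2 ⟨hxe, hxS⟩, hxP⟩⟩

def pairGraph (F : Finset (Finset α)) (M : Finset α) : SimpleGraph M :=
  SimpleGraph.fromRel fun x y => ({x.1, y.1} : Finset α) ∈ F

lemma IsBlockingSet.connected_pairGraph {F : Finset (Finset α)} {M : Finset α}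
    (hF : IsBlockingSet 2 M F) (hM : M.Nonempty) : (pairGraph F M).Connected := by
  classical
  have : Nonempty M := hM.to_subtype
  refine ⟨fun x y => by_contra fun hxy => ?_⟩
  -- `A` is the component of `x`; a member of `F` crossing `(A, M \ A)` would be an edge
  -- leaving it.
  let A : Finset α := {z ∈ M | ∀ hz : z ∈ M, (pairGraph F M).Reachable x ⟨z, hz⟩}
  have hA : A.Nonempty := ⟨x, mem_filter.2 ⟨x.2, fun _ => SimpleGraph.Reachable.rfl⟩⟩
  have hB : (M \ A).Nonempty :=
    ⟨y, mem_sdiff.2 ⟨y.2, fun hy => hxy ((mem_filter.1 hy).2 y.2)⟩⟩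
  have hPart := isDPartition_two hA hB disjoint_sdiff
  rw [union_sdiff_of_subset (filter_subset _ M)] at hPart
  obtain ⟨p, hp, hmeet⟩ := hF.2 _ hPart
  obtain ⟨a, ha⟩ := hmeet 0
  obtain ⟨b, hb⟩ := hmeet 1
  simp only [Matrix.cons_val_zero, Matrix.cons_val_one, mem_inter, mem_sdiff] at ha hb
  obtain ⟨hap, haA⟩ := ha
  obtain ⟨hbp, hbM, hbA⟩ := hb
  have hab : a ≠ b := by rintro rfl; exact hbA haA
  have hp_eq : p = {a, b} :=
    (eq_of_subset_of_card_le (insert_subset hap (singleton_subset_iff.2 hbp))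
      (by rw [card_pair hab, (hF.1 p hp).2])).symm
  have haM := (mem_filter.1 haA).1
  have hadj : (pairGraph F M).Adj ⟨a, haM⟩ ⟨b, hbM⟩ := by
    refine (SimpleGraph.fromRel_adj _ _ _).2 ⟨fun h => hab (congrArg Subtype.val h), .inl ?_⟩
    exact hp_eq ▸ hp
  exact hbA (mem_filter.2 ⟨hbM, fun _ => ((mem_filter.1 haA).2 haM).trans hadj.reachable⟩)

lemma card_edgeSet_pairGraph_le (F : Finset (Finset α)) (M : Finset α) :
    Nat.card (pairGraph F M).edgeSet ≤ #F := by
  rw [← Nat.card_eq_finsetCard]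
  refine Nat.card_le_card_of_injective
    (fun e => ⟨(e.1.map Subtype.val).toFinset, ?_⟩) fun e e' h => ?_
  · obtain ⟨e, he⟩ := e
    induction e using Sym2.ind with
    | h x y =>
      simp only [SimpleGraph.mem_edgeSet, pairGraph, SimpleGraph.fromRel_adj] at he
      rw [Sym2.map_mk, Sym2.toFinset_mk_eq]
      exact he.2.elim id (pair_comm (x : α) y ▸ ·)
  · have h' := congrArg (fun p : F => (p : Finset α)) h
    simp only [Finset.ext_iff, Sym2.mem_toFinset, Sym2.mem_map] at h'
    refine Subtype.ext (Sym2.ext fun z => ?_)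
    simpa using h' z

lemma IsBlockingSet.card_le_card_add_one {F : Finset (Finset α)} {M : Finset α}
    (hF : IsBlockingSet 2 M F) : #M ≤ #F + 1 := by
  rcases M.eq_empty_or_nonempty with rfl | hM
  · simp
  calc #M = Nat.card M := (Nat.card_eq_finsetCard M).symm
    _ ≤ Nat.card (pairGraph F M).edgeSet + 1 :=
      (hF.connected_pairGraph hM).card_vert_le_card_edgeSet_add_one
    _ ≤ #F + 1 := by gcongr; exact card_edgeSet_pairGraph_le F M

lemma IsBlockingSet.card_sub_le_card_filter_superset {k : ℕ} {V S : Finset α}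
    {E : Finset (Finset α)} (hE : IsBlockingSet (k + 2) V E) (hSV : S ⊆ V) (hS : #S = k) :
    #V - k - 1 ≤ #{e ∈ E | S ⊆ e} := by
  have hlink := (hE.link hSV hS).card_le_card_add_one
  have hcard : #(_root_.link E S) ≤ #{e ∈ E | S ⊆ e} := card_image_le
  rw [card_sdiff_of_subset hSV, hS] at hlink
  omega

lemma IsBlockingSet.choose_mul_le_card_mul {k : ℕ} {V : Finset α} {E : Finset (Finset α)}
    (hE : IsBlockingSet (k + 2) V E) :
    (#V).choose k * (#V - k - 1) ≤ #E * (k + 2).choose 2 := by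
  have h := card_nsmul_le_card_nsmul (s := powersetCard k V) (t := E) (· ⊆ ·)
    (fun S hS => hE.card_sub_le_card_filter_superset (mem_powersetCard.1 hS).1
      (mem_powersetCard.1 hS).2)
    fun e he => (?_ : #((powersetCard k V).bipartiteBelow (· ⊆ ·) e) ≤ (k + 2).choose 2)
  · simpa [card_powersetCard] using h
  · have heq : (powersetCard k V).bipartiteBelow (· ⊆ ·) e = powersetCard k e := by
      ext S
      simp only [bipartiteBelow, mem_filter, mem_powersetCard]
      exact ⟨fun h => ⟨h.2, h.1.2⟩, fun h => ⟨⟨h.1.trans (hE.1 e he).1, h.2⟩, h.1⟩⟩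
    rw [heq, card_powersetCard, (hE.1 e he).2, Nat.choose_symm_add]

lemma exists_isBlockingSet (d : ℕ) (V : Finset α) :
    ∃ E : Finset (Finset α), IsBlockingSet d V E := by
  refine ⟨powersetCard d V, fun e he => mem_powersetCard.1 he, fun P hP => ?_⟩
  choose x hx using hP.1
  have hx_inj : Function.Injective x := fun i j hij => by
    by_contra hne
    exact disjoint_left.1 (hP.2.1 i j hne) (hx i) (hij ▸ hx j)
  refine ⟨univ.image x, mem_powersetCard.2 ⟨?_, ?_⟩,
    fun i => ⟨x i, mem_inter.2 ⟨mem_image_of_mem x (mem_univ i), hx i⟩⟩⟩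
  · exact image_subset_iff.2 fun i _ => hP.2.2 ▸ mem_biUnion.2 ⟨i, mem_univ i, hx i⟩
  · rw [card_image_of_injective _ hx_inj, card_univ, Fintype.card_fin]

lemma exists_isBlockingSet_card_eq_phi (d n : ℕ) :
    ∃ E : Finset (Finset (Fin n)), IsBlockingSet d univ E ∧ #E = phi d n := by
  obtain ⟨E, hE⟩ := exists_isBlockingSet d (univ : Finset (Fin n))
  have hne : {m | ∃ E : Finset (Finset (Fin n)), IsBlockingSet d univ E ∧ #E = m}.Nonempty :=
    ⟨#E, E, hE, rfl⟩
  exact Nat.sInf_mem hne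

lemma prod_range_cast_sub {R : Type*} [CommRing R] {n k : ℕ} (hk : k ≤ n) :
    ∏ i ∈ range k, ((n : R) - i) = n.descFactorial k := by
  rw [Nat.descFactorial_eq_prod_range, Nat.cast_prod]
  exact prod_congr rfl fun i hi => (Nat.cast_sub ((mem_range.1 hi).le.trans hk)).symm

theorem phi_lower_bound (d n : ℕ) (hd : 3 ≤ d) (hn : d ≤ n) :
    2 * ((n : ℚ) - d + 1) * (∏ i ∈ Finset.range (d - 2), ((n : ℚ) - i)) /
        (Nat.factorial d) ≤ (phi d n : ℚ) := by
  obtain ⟨k, rfl⟩ : ∃ k, d = k + 2 := ⟨d - 2, by omega⟩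
  obtain ⟨E, hE, hEcard⟩ := exists_isBlockingSet_card_eq_phi (k + 2) n
  have hcount := hE.choose_mul_le_card_mul
  rw [hEcard, card_univ, Fintype.card_fin] at hcount
  have hcount' : (n.choose k : ℚ) * (n - (k + 2) + 1) ≤ phi (k + 2) n * (k + 2).choose 2 := by
    rw [show (n : ℚ) - (k + 2) + 1 = (n - k - 1 : ℕ) by
      rw [Nat.sub_sub, Nat.cast_sub (by omega)]; push_cast; ring]
    exact_mod_cast hcount
  have hfact : ((k + 2).factorial : ℚ) = (k + 2).choose 2 * (2 * k.factorial) := by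
    rw [← Nat.add_choose_mul_factorial_mul_factorial k 2]
    push_cast [Nat.factorial_two]
    ring
  rw [Nat.add_sub_cancel, prod_range_cast_sub (by omega),
    Nat.descFactorial_eq_factorial_mul_choose, div_le_iff₀ (by positivity), hfact]
  push_cast
  calc 2 * ((n : ℚ) - (k + 2) + 1) * (k.factorial * n.choose k)
      = (n.choose k * ((n : ℚ) - (k + 2) + 1)) * (2 * k.factorial) := by ring
    _ ≤ (phi (k + 2) n * (k + 2).choose 2) * (2 * k.factorial) := by gcongr
    _ = _ := by ring
end

section
/- Let \(A, B\) be disjoint \(k\)-element sets, \(d \ge 1\). For each \(i \in \{0, \dots, d-1\}\), let \(T_i\) be a \((d-i)\)-blocking set on \(B\), and let \(W_i = \{\, s \cup t : s \in \binom{A}{i},\ t \in T_i \,\}\). Then \(W = \bigcup_{i=0}^{d-1} W_i\) is a \(d\)-blocking set on \(A \cup B\). -/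
/-! Given a `d`-partition of `A ∪ B`, let `S` be the set of its parts that miss `B`; they lie in `A`,
and since `B ≠ ∅` there are `i = #S < d` of them. One point from each gives `s ∈ (A choose i)`,
while the other `d - i` parts, cut down to `B`, form a `(d - i)`-partition of `B`, which some
`t ∈ Tᵢ` meets in every part. Then `s ∪ t ∈ W` meets all `d` parts. -/

section

variable {α : Type*} [DecidableEq α]

open Finset

theorem IsDPartition.subset {d : ℕ} {V : Finset α} {P : Fin d → Finset α}
    (hP : IsDPartition d V P) (j : Fin d) : P j ⊆ V :=
  hP.2.2 ▸ subset_biUnion_of_mem P (mem_univ j)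

theorem IsDPartition.nonempty {d : ℕ} {V : Finset α} {P : Fin d → Finset α}
    (hP : IsDPartition d V P) (hd : 1 ≤ d) : V.Nonempty :=
  (hP.1 ⟨0, hd⟩).mono (hP.subset _)

theorem IsBlockingSet.exists_forall_inter_nonempty {ι : Type*} {n : ℕ} {V : Finset α}
    {E : Finset (Finset α)} (hE : IsBlockingSet n V E) {C : Finset ι} (hC : #C = n)
    {Q : ι → Finset α} (hne : ∀ j ∈ C, (Q j).Nonempty)
    (hdisj : (C : Set ι).PairwiseDisjoint Q) (hunion : C.biUnion Q = V) :
    ∃ e ∈ E, ∀ j ∈ C, (e ∩ Q j).Nonempty := by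
  set f : C ≃ Fin n := C.equivFinOfCardEq hC
  have hpart : IsDPartition n V fun m => Q (f.symm m) := by
    refine ⟨fun m => hne _ (f.symm m).2, fun m m' hmm' => ?_, ?_⟩
    · exact hdisj (f.symm m).2 (f.symm m').2 fun h => hmm' (f.symm.injective (Subtype.ext h))
    · ext x
      simp only [mem_biUnion, mem_univ, true_and, ← hunion]
      exact ⟨fun ⟨m, hx⟩ => ⟨_, (f.symm m).2, hx⟩,
        fun ⟨j, hj, hx⟩ => ⟨f ⟨j, hj⟩, by simpa using hx⟩⟩
  obtain ⟨e, he, hmeet⟩ := hE.2 _ hpart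
  exact ⟨e, he, fun j hj => by simpa using hmeet (f ⟨j, hj⟩)⟩

theorem exists_transversal {ι : Type*} (S : Finset ι) {P : ι → Finset α}
    (hne : ∀ j ∈ S, (P j).Nonempty) (hdisj : (S : Set ι).PairwiseDisjoint P) :
    ∃ s ⊆ S.biUnion P, #s = #S ∧ ∀ j ∈ S, (s ∩ P j).Nonempty := by
  obtain rfl | ⟨j₀, hj₀⟩ := S.eq_empty_or_nonempty
  · exact ⟨∅, by simp⟩
  have : Nonempty α := ⟨(hne j₀ hj₀).choose⟩
  choose! a ha using hne
  refine ⟨S.image a, ?_, card_image_of_injOn ?_, fun j hj => ⟨a j, ?_⟩⟩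
  · simp only [subset_iff, mem_image, mem_biUnion]
    rintro _ ⟨j, hj, rfl⟩
    exact ⟨j, hj, ha j hj⟩
  · exact fun j hj j' hj' h => hdisj.elim_finset hj hj' (a j) (ha j hj) (h ▸ ha j' hj')
  · exact mem_inter.2 ⟨mem_image_of_mem a hj, ha j hj⟩

/-- The family `W = ⋃ᵢ {s ∪ t : s ∈ (A choose i), t ∈ Tᵢ}`. -/
def splitFamily {d : ℕ} (A : Finset α) (T : Fin d → Finset (Finset α)) : Finset (Finset α) :=
  univ.biUnion fun i => ((A.powersetCard i.val) ×ˢ (T i)).image fun p => p.1 ∪ p.2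

theorem mem_splitFamily {d : ℕ} {A e : Finset α} {T : Fin d → Finset (Finset α)} :
    e ∈ splitFamily A T ↔ ∃ i : Fin d, ∃ s ⊆ A, #s = i ∧ ∃ t ∈ T i, s ∪ t = e := by
  simp [splitFamily, and_assoc]

theorem subset_union_and_card_of_mem_splitFamily {d : ℕ} {A B e : Finset α}
    (hAB : Disjoint A B) {T : Fin d → Finset (Finset α)}
    (hT : ∀ i : Fin d, ∀ t ∈ T i, t ⊆ B ∧ #t = d - i) (he : e ∈ splitFamily A T) :
    e ⊆ A ∪ B ∧ #e = d := by
  obtain ⟨i, s, hsA, hs, t, ht, rfl⟩ := mem_splitFamily.1 he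
  obtain ⟨htB, ht⟩ := hT i t ht
  refine ⟨union_subset_union hsA htB, ?_⟩
  rw [card_union_of_disjoint (hAB.mono hsA htB), hs, ht]
  omega

theorem exists_mem_splitFamily_forall_inter_nonempty {d : ℕ} {A B : Finset α}
    (hB : B.Nonempty) {T : Fin d → Finset (Finset α)}
    (hT : ∀ i : Fin d, IsBlockingSet (d - i.val) B (T i)) {P : Fin d → Finset α}
    (hP : IsDPartition d (A ∪ B) P) :
    ∃ e ∈ splitFamily A T, ∀ j, (e ∩ P j).Nonempty := by
  set S := univ.filter fun j => Disjoint (P j) B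
  have hmem : ∀ x ∈ B, ∃ j ∉ S, x ∈ P j := fun x hx => by
    obtain ⟨j, -, hxj⟩ := mem_biUnion.1 (hP.2.2 ▸ mem_union_right A hx)
    exact ⟨j, fun hj => disjoint_left.1 (mem_filter.1 hj).2 hxj hx, hxj⟩
  have hS : #S < d := by
    obtain ⟨j, hj, -⟩ := hmem _ hB.choose_spec
    simpa using (card_lt_iff_ne_univ S).2 (ne_of_mem_of_not_mem' (mem_univ j) hj).symm
  obtain ⟨s, hsP, hs, hsmeet⟩ := exists_transversal S (fun j _ => hP.1 j)
    fun i _ j _ hij => hP.2.1 i j hij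
  have hsA : s ⊆ A := fun x hx => by
    obtain ⟨j, hj, hxj⟩ := mem_biUnion.1 (hsP hx)
    exact (mem_union.1 (hP.subset j hxj)).resolve_right
      (disjoint_left.1 (mem_filter.1 hj).2 hxj)
  have hunion : Sᶜ.biUnion (fun j => P j ∩ B) = B := by
    ext x
    simp only [mem_biUnion, mem_compl, mem_inter]
    exact ⟨fun ⟨_, _, _, hx⟩ => hx, fun hx => (hmem x hx).imp fun j h => ⟨h.1, h.2, hx⟩⟩
  obtain ⟨t, ht, htmeet⟩ := (hT ⟨#S, hS⟩).exists_forall_inter_nonempty (by simp [card_compl])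
    (fun j hj => not_disjoint_iff_nonempty_inter.1 (by simpa [S] using hj))
    (fun i _ j _ hij => (hP.2.1 i j hij).mono inter_subset_left inter_subset_left) hunion
  refine ⟨s ∪ t, mem_splitFamily.2 ⟨⟨#S, hS⟩, s, hsA, hs, t, ht, rfl⟩, fun j => ?_⟩
  by_cases hj : j ∈ S
  · exact (hsmeet j hj).mono (inter_subset_inter_right subset_union_left)
  · obtain ⟨x, hx⟩ := htmeet j (mem_compl.2 hj)
    rw [mem_inter, mem_inter] at hx
    exact ⟨x, mem_inter.2 ⟨mem_union_right s hx.1, hx.2.1⟩⟩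

end

theorem blocking_of_split {α : Type*} [DecidableEq α] (d k : ℕ) (hd : 1 ≤ d)
    (A B : Finset α) (hAB : Disjoint A B) (hA : A.card = k) (hB : B.card = k)
    (T : Fin d → Finset (Finset α))
    (hT : ∀ i : Fin d, IsBlockingSet (d - i.val) B (T i)) :
    IsBlockingSet d (A ∪ B)
      ((Finset.univ : Finset (Fin d)).biUnion fun i =>
        ((A.powersetCard i.val) ×ˢ (T i)).image fun p => p.1 ∪ p.2) := by
  refine ⟨fun _ => subset_union_and_card_of_mem_splitFamily hAB fun i => (hT i).1, fun P hP => ?_⟩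
  -- `#A = #B`, so `B = ∅` would leave `A ∪ B = ∅` without `d`-partitions for `d ≥ 1`.
  have hBne : B.Nonempty := Finset.nonempty_iff_ne_empty.2 fun hB0 => by
    have hA0 : A = ∅ := Finset.card_eq_zero.1 (by rw [hA, ← hB, hB0, Finset.card_empty])
    simpa [hA0, hB0] using hP.nonempty hd
  exact exists_mem_splitFamily_forall_inter_nonempty hBne hT hP
end

section
/- Let \(A = \{a_0, \dots, a_{k-1}\}\) and \(B = \{b_0, \dots, b_{k-1}\}\) be disjoint \(k\)-element sets and let \(\mathcal{H}(A,B)\) consist of all triples \(\{a_i, a_j, b_{i+j}\}\) and \(\{a_i, a_j, b_{i+j+1}\}\) (indices mod \(k\), \(i \ne j\)). Suppose \(X \subseteq A \cup B\) satisfies \(A \cap X \neq \emptyset\), \(A \setminus X \neq \emptyset\), and \(B \setminus X \neq \emptyset\). Then every vertex of \(B \setminus X\) is adjacent in \(G_{\mathcal{H}(A,B)}(X)\) to some vertex of \(A \setminus X\). -/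
/-- The graph `G_E(X)`: edges are pairs `{y, z}` such that `{x, y, z} ∈ E` for some `x ∈ X`. -/
def blockGraphS {α : Type*} [DecidableEq α] (E : Set (Finset α)) (X : Set α) :
    SimpleGraph α where
  Adj y z := y ≠ z ∧ ∃ x ∈ X, ({x, y, z} : Finset α) ∈ E
  symm := ⟨by
    rintro y z ⟨hyz, x, hx, he⟩
    refine ⟨hyz.symm, x, hx, ?_⟩
    have : ({x, z, y} : Finset α) = {x, y, z} := by ext t; simp; tauto
    rwa [this]⟩
  loopless := ⟨fun y h => h.1 rfl⟩

/-- The hypergraph `H(A,B)`: all triples `{a_i, a_j, b_{i+j}}` and `{a_i, a_j, b_{i+j+1}}`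
with indices taken modulo `k` and `i ≠ j`. -/
def HAB {α : Type*} [DecidableEq α] (k : ℕ) (a b : ZMod k → α) : Set (Finset α) :=
  { e | ∃ i j : ZMod k, i ≠ j ∧
      (e = ({a i, a j, b (i + j)} : Finset α) ∨
       e = ({a i, a j, b (i + j + 1)} : Finset α)) }

/-! If `b_m` had no neighbour in `A \ X`, then whenever `a_i ∈ X` both partners `a_{m-i}` and
`a_{m-i-1}` of `a_i` in a triple through `b_m` would lie in `X` as well. Composing the two
reflections `i ↦ m - i` and `i ↦ m - i - 1` gives the shifts `i ↦ i ± 1`, so all of `A` would lie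
in `X`. -/

theorem add_intCast_mem_of_forall_add_one_mem {R : Type*} [AddGroupWithOne R] {S : Set R}
    (hadd : ∀ x ∈ S, x + 1 ∈ S) (hsub : ∀ x ∈ S, x - 1 ∈ S) {p : R} (hp : p ∈ S) (n : ℤ) :
    p + n ∈ S := by
  induction n using Int.induction_on with
  | zero => simpa using hp
  | succ i ih => simpa [add_assoc] using hadd _ ih
  | pred i ih => simpa [add_sub_assoc] using hsub _ ih

theorem ZMod.eq_univ_of_forall_add_one_mem {k : ℕ} {S : Set (ZMod k)} (hS : S.Nonempty)
    (hadd : ∀ x ∈ S, x + 1 ∈ S) (hsub : ∀ x ∈ S, x - 1 ∈ S) : S = Set.univ := by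
  obtain ⟨p, hp⟩ := hS
  refine Set.eq_univ_of_forall fun q => ?_
  obtain ⟨n, hn⟩ := ZMod.intCast_surjective (q - p)
  simpa [hn] using add_intCast_mem_of_forall_add_one_mem hadd hsub hp n

theorem ZMod.eq_univ_of_forall_add_eq_mem {k : ℕ} {S : Set (ZMod k)} (m : ZMod k)
    (hS : S.Nonempty) (h : ∀ i j, (i + j = m ∨ i + j + 1 = m) → i ∈ S → j ∈ S) :
    S = Set.univ := by
  refine ZMod.eq_univ_of_forall_add_one_mem hS (fun x hx => ?_) (fun x hx => ?_)
  · exact h _ _ (Or.inl (by ring)) (h x (m - x - 1) (Or.inr (by ring)) hx)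
  · exact h _ _ (Or.inr (by ring)) (h x (m - x) (Or.inl (by ring)) hx)

theorem blockGraphS_HAB_adj {α : Type*} [DecidableEq α] {k : ℕ} {a b : ZMod k → α}
    (hab : Disjoint (Set.range a) (Set.range b)) {X : Set α} {i j m : ZMod k} (hij : i ≠ j)
    (hi : a i ∈ X) (hm : i + j = m ∨ i + j + 1 = m) :
    (blockGraphS (HAB k a b) X).Adj (b m) (a j) := by
  refine ⟨fun h => Set.disjoint_right.mp hab ⟨m, rfl⟩ ⟨j, h.symm⟩, a i, hi, i, j, hij, ?_⟩
  rw [Finset.pair_comm]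
  rcases hm with rfl | rfl
  exacts [Or.inl rfl, Or.inr rfl]

theorem hab_B_attached_to_A_general {α : Type*} [DecidableEq α] (k : ℕ)
    (a b : ZMod k → α)
    (hab : Disjoint (Set.range a) (Set.range b)) (X : Set α)
    (hAX : (Set.range a ∩ X).Nonempty) (hA : (Set.range a \ X).Nonempty) :
    ∀ z ∈ Set.range b \ X, ∃ y ∈ Set.range a \ X,
      (blockGraphS (HAB k a b) X).Adj z y := by
  rintro _ ⟨⟨m, rfl⟩, -⟩
  by_contra! hno
  have hclosed : ∀ i j, (i + j = m ∨ i + j + 1 = m) → a i ∈ X → a j ∈ X := by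
    intro i j hm hi
    by_contra hj
    exact hno (a j) ⟨⟨j, rfl⟩, hj⟩ (blockGraphS_HAB_adj hab (fun h => hj (h ▸ hi)) hi hm)
  obtain ⟨_, ⟨p, rfl⟩, hp⟩ := hAX
  obtain ⟨_, ⟨q, rfl⟩, hq⟩ := hA
  have hall := ZMod.eq_univ_of_forall_add_eq_mem (S := {i | a i ∈ X}) m ⟨p, hp⟩ hclosed
  exact hq (Set.eq_univ_iff_forall.mp hall q)

theorem hab_B_attached_to_A {α : Type*} [DecidableEq α] (k : ℕ) (hk : 2 ≤ k)
    (a b : ZMod k → α) (ha : Function.Injective a) (hb : Function.Injective b)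
    (hab : Disjoint (Set.range a) (Set.range b)) (X : Set α)
    (hX : X ⊆ Set.range a ∪ Set.range b)
    (hAX : (Set.range a ∩ X).Nonempty) (hA : (Set.range a \ X).Nonempty)
    (hB : (Set.range b \ X).Nonempty) :
    ∀ z ∈ Set.range b \ X, ∃ y ∈ Set.range a \ X,
      (blockGraphS (HAB k a b) X).Adj z y :=
  hab_B_attached_to_A_general k a b hab X hAX hA
end
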